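/- Let S be a finite bichromatic point set with h participating points p₁,…,p_h. Partition the plane by the h+1 open vertical slabs and h+1 open horizontal slabs determined by the x-coordinates and y-coordinates of the participating points respectively. Then every axis-aligned box arising as the intersection of a vertical slab and a horizontal slab that contains at least one point of S is a safe box for S. -/

import Mathlib

open Classical

noncomputable section

abbrev Pt := ℝ × ℝ

/-- An axis-aligned box in the plane. -/
structure Box where
  x0 : ℝ
  x1 : ℝ
  y0 : ℝ
  y1 : ℝ
  hx : x0 < x1
  hy : y0 < y1

/-- The cross of a box: the union of its vertical and horizontal strips. -/
def Box.cross (B : Box) : Set Pt :=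
  {p | (B.x0 ≤ p.1 ∧ p.1 ≤ B.x1) ∨ (B.y0 ≤ p.2 ∧ p.2 ≤ B.y1)}

/-- The four open quadrants of a box. -/
def Box.NE (B : Box) : Set Pt := {p | B.x1 < p.1 ∧ B.y1 < p.2}
def Box.NW (B : Box) : Set Pt := {p | p.1 < B.x0 ∧ B.y1 < p.2}
def Box.SE (B : Box) : Set Pt := {p | B.x1 < p.1 ∧ p.2 < B.y0}
def Box.SW (B : Box) : Set Pt := {p | p.1 < B.x0 ∧ p.2 < B.y0}

/-- Membership in the open interior of a box. -/
def Box.inside (B : Box) (p : Pt) : Prop :=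
  B.x0 < p.1 ∧ p.1 < B.x1 ∧ B.y0 < p.2 ∧ p.2 < B.y1

/-- Membership in the closed box. -/
def Box.memClosed (B : Box) (p : Pt) : Prop :=
  B.x0 ≤ p.1 ∧ p.1 ≤ B.x1 ∧ B.y0 ≤ p.2 ∧ p.2 ≤ B.y1

/-- `p` avoids the boundary lines of the box and of its quadrants. -/
def Box.offBoundary (B : Box) (p : Pt) : Prop :=
  p.1 ≠ B.x0 ∧ p.1 ≠ B.x1 ∧ p.2 ≠ B.y0 ∧ p.2 ≠ B.y1

/-- Minimal points of `T` towards the SW corner of the NE quadrant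
(the usual minimal points under coordinatewise domination). -/
def neMinSet (T : Set Pt) : Set Pt :=
  {p ∈ T | ∀ q ∈ T, (q.1 ≤ p.1 ∧ q.2 ≤ p.2) → q = p}

/-- Minimal points of `T` towards the SE corner of the NW quadrant. -/
def nwMinSet (T : Set Pt) : Set Pt :=
  {p ∈ T | ∀ q ∈ T, (p.1 ≤ q.1 ∧ q.2 ≤ p.2) → q = p}

/-- Minimal points of `T` towards the NW corner of the SE quadrant. -/
def seMinSet (T : Set Pt) : Set Pt :=
  {p ∈ T | ∀ q ∈ T, (q.1 ≤ p.1 ∧ p.2 ≤ q.2) → q = p}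

/-- Minimal points of `T` towards the NE corner of the SW quadrant
(the usual maximal points under coordinatewise domination). -/
def swMinSet (T : Set Pt) : Set Pt :=
  {p ∈ T | ∀ q ∈ T, (p.1 ≤ q.1 ∧ p.2 ≤ q.2) → q = p}

/-- `z` lies in the open axis-aligned rectangle spanned by `p` and `q`. -/
def openRect (p q z : Pt) : Prop :=
  min p.1 q.1 < z.1 ∧ z.1 < max p.1 q.1 ∧ min p.2 q.2 < z.2 ∧ z.2 < max p.2 q.2

/-- `p` and `q` see each other in `S`: the open rectangle they span is empty of `S`. -/
def sees (S : Set Pt) (p q : Pt) : Prop := ∀ z ∈ S, ¬ openRect p q z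

/-- `p` participates in `S`: some point of the opposite color sees `p`. -/
def participates (S : Set Pt) (color : Pt → Bool) (p : Pt) : Prop :=
  ∃ q ∈ S, color q ≠ color p ∧ sees S p q

/-- All points of `S` in the cross of `B` have color `c`. -/
def crossSafeFor (S : Set Pt) (color : Pt → Bool) (c : Bool) (B : Box) : Prop :=
  ∀ p ∈ S, p ∈ B.cross → color p = c

/-- `B` is `c`-safe for `S`: `c`-cross-safe and the four directional minimal
sets of the quadrants only contain points of color `c`. -/
def safeFor (S : Set Pt) (color : Pt → Bool) (c : Bool) (B : Box) : Prop :=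
  crossSafeFor S color c B ∧
  (∀ p ∈ neMinSet (S ∩ B.NE), color p = c) ∧
  (∀ p ∈ nwMinSet (S ∩ B.NW), color p = c) ∧
  (∀ p ∈ seMinSet (S ∩ B.SE), color p = c) ∧
  (∀ p ∈ swMinSet (S ∩ B.SW), color p = c)

/-- `B` is safe: red-safe (`true`) or blue-safe (`false`). -/
def isSafe (S : Set Pt) (color : Pt → Bool) (B : Box) : Prop :=
  safeFor S color true B ∨ safeFor S color false B

/-- General position: pairwise distinct x-coordinates and y-coordinates. -/
def genPos (S : Set Pt) : Prop :=
  ∀ p ∈ S, ∀ q ∈ S, p ≠ q → p.1 ≠ q.1 ∧ p.2 ≠ q.2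

/-!
Let `p` be a point of `S` inside `B`. Two differently coloured points `a`, `b` of `S` always
span a closed rectangle containing a differently coloured pair that sees each other, so this
rectangle contains a participating point other than `b`. If some `z` of the other colour
than `p` lay in the cross, the rectangle spanned by `p` and `z` would lie in one strip of
the cross, which has no participating point. If a minimal point `q` of a quadrant had the
other colour, every point of the rectangle spanned by `p` and `q` other than `q` would lie
in the cross. Hence `B` is safe for the colour of `p`.
-/

open Set

lemma openRect_iff {p q z : Pt} : openRect p q z ↔ z.1 ∈ uIoo p.1 q.1 ∧ z.2 ∈ uIoo p.2 q.2 :=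
  ⟨fun ⟨h1, h2, h3, h4⟩ => ⟨⟨h1, h2⟩, h3, h4⟩, fun ⟨⟨h1, h2⟩, h3, h4⟩ => ⟨h1, h2, h3, h4⟩⟩

lemma openRect_comm {p q z : Pt} : openRect p q z ↔ openRect q p z := by
  rw [openRect_iff, openRect_iff, uIoo_comm p.1, uIoo_comm p.2]

lemma sees_comm {S : Set Pt} {p q : Pt} : sees S p q ↔ sees S q p :=
  forall₂_congr fun _ _ => not_congr openRect_comm

lemma not_openRect_right (p z : Pt) : ¬ openRect p z z := fun h =>
  right_notMem_uIoo (openRect_iff.1 h).1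

lemma openRect.mem_uIcc {p q z : Pt} (h : openRect p q z) : z ∈ uIcc p q := by
  rw [uIcc_prod_eq]
  exact ⟨uIoo_subset_uIcc_self (openRect_iff.1 h).1, uIoo_subset_uIcc_self (openRect_iff.1 h).2⟩

lemma uIoo_subset_uIoo_of_mem {α : Type*} [LinearOrder α] {a b z : α} (hz : z ∈ uIoo a b) :
    uIoo a z ⊆ uIoo a b :=
  Ioo_subset_Ioo (le_inf inf_le_left hz.1.le) (sup_le le_sup_left hz.2.le)

lemma openRect.trans {a b z w : Pt} (hz : openRect a b z) (hw : openRect a z w) :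
    openRect a b w := by
  rw [openRect_iff] at *
  exact ⟨uIoo_subset_uIoo_of_mem hz.1 hw.1, uIoo_subset_uIoo_of_mem hz.2 hw.2⟩

lemma card_filter_openRect_lt {S : Finset Pt} {a b z : Pt} (hz : z ∈ S) (hzr : openRect a b z) :
    (S.filter (openRect a z)).card < (S.filter (openRect a b)).card :=
  Finset.card_lt_card <| Finset.ssubset_iff_of_subset (Finset.monotone_filter_right S
    fun _ _ => hzr.trans) |>.2 ⟨z, Finset.mem_filter.2 ⟨hz, hzr⟩,
      fun h => not_openRect_right a z (Finset.mem_filter.1 h).2⟩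

-- A point of `S` in the open rectangle of `a` and `b` differs in colour from `a` or from `b`;
-- replacing the other end by it strictly shrinks the set of points of `S` in the rectangle.
theorem exists_sees_mem_uIcc {β : Type*} (S : Finset Pt) (color : Pt → β) {a b : Pt}
    (ha : a ∈ S) (hb : b ∈ S) (hab : color a ≠ color b) :
    ∃ a' ∈ S, ∃ b' ∈ S, color a' ≠ color b' ∧ sees S a' b' ∧ a' ∈ uIcc a b ∧ b' ∈ uIcc a b := by
  induction hn : (S.filter (openRect a b)).card using Nat.strong_induction_on generalizing a b with
  | _ n ih =>
  subst hn
  by_cases hsees : sees S a b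
  · exact ⟨a, ha, b, hb, hab, hsees, left_mem_uIcc, right_mem_uIcc⟩
  obtain ⟨z, hz, hzr⟩ : ∃ z ∈ S, openRect a b z := by simpa [sees] using hsees
  by_cases hza : color a = color z
  · have hlt : (S.filter (openRect z b)).card < (S.filter (openRect a b)).card := by
      simpa only [openRect_comm (p := b)] using card_filter_openRect_lt hz (openRect_comm.1 hzr)
    obtain ⟨a', ha', b', hb', hne, hs, ha'r, hb'r⟩ := ih _ hlt hz hb (hza ▸ hab) rfl
    have hsub : uIcc z b ⊆ uIcc a b := uIcc_subset_uIcc hzr.mem_uIcc right_mem_uIcc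
    exact ⟨a', ha', b', hb', hne, hs, hsub ha'r, hsub hb'r⟩
  · obtain ⟨a', ha', b', hb', hne, hs, ha'r, hb'r⟩ :=
      ih _ (card_filter_openRect_lt hz hzr) ha hz hza rfl
    have hsub : uIcc a z ⊆ uIcc a b := uIcc_subset_uIcc left_mem_uIcc hzr.mem_uIcc
    exact ⟨a', ha', b', hb', hne, hs, hsub ha'r, hsub hb'r⟩

theorem color_eq_of_forall_participates_eq {S : Finset Pt} {color : Pt → Bool} {p q : Pt}
    (hp : p ∈ S) (hq : q ∈ S)
    (h : ∀ z ∈ S, z ∈ uIcc p q → participates (↑S : Set Pt) color z → z = q) :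
    color p = color q := by
  by_contra hpq
  obtain ⟨a, ha, b, hb, hab, hs, har, hbr⟩ := exists_sees_mem_uIcc S color hp hq hpq
  have haq := h a ha har ⟨b, hb, hab.symm, hs⟩
  have hbq := h b hb hbr ⟨a, ha, hab, sees_comm.1 hs⟩
  exact hab (haq ▸ hbq ▸ rfl)

namespace Box

variable (B : Box) {S : Finset Pt} {p q z : Pt}

lemma uIcc_subset_cross_of_fst (hp : p.1 ∈ Icc B.x0 B.x1) (hq : q.1 ∈ Icc B.x0 B.x1) :
    uIcc p q ⊆ B.cross := fun _ hz =>
  Or.inl (uIcc_subset_Icc hp hq ((uIcc_prod_eq p q).subset hz).1)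

lemma uIcc_subset_cross_of_snd (hp : p.2 ∈ Icc B.y0 B.y1) (hq : q.2 ∈ Icc B.y0 B.y1) :
    uIcc p q ⊆ B.cross := fun _ hz =>
  Or.inr (uIcc_subset_Icc hp hq ((uIcc_prod_eq p q).subset hz).2)

variable {B}

lemma eq_of_mem_neMinSet (hp : B.inside p) (hq : q ∈ neMinSet (↑S ∩ B.NE)) (hz : z ∈ S)
    (hzpq : z ∈ uIcc p q) (hzc : z ∉ B.cross) : z = q := by
  obtain ⟨⟨-, hq1, hq2⟩, hmin⟩ := hq
  obtain ⟨hp1, hp2, hp3, hp4⟩ := hp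
  rw [uIcc_prod_eq, mem_prod, uIcc_of_le (by linarith), uIcc_of_le (by linarith)] at hzpq
  simp only [cross] at hzc
  refine hmin z ⟨hz, ?_, ?_⟩ ⟨hzpq.1.2, hzpq.2.2⟩ <;> by_contra! <;> grind

lemma eq_of_mem_nwMinSet (hp : B.inside p) (hq : q ∈ nwMinSet (↑S ∩ B.NW)) (hz : z ∈ S)
    (hzpq : z ∈ uIcc p q) (hzc : z ∉ B.cross) : z = q := by
  obtain ⟨⟨-, hq1, hq2⟩, hmin⟩ := hq
  obtain ⟨hp1, hp2, hp3, hp4⟩ := hp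
  rw [uIcc_prod_eq, mem_prod, uIcc_of_ge (by linarith), uIcc_of_le (by linarith)] at hzpq
  simp only [cross] at hzc
  refine hmin z ⟨hz, ?_, ?_⟩ ⟨hzpq.1.1, hzpq.2.2⟩ <;> by_contra! <;> grind

lemma eq_of_mem_seMinSet (hp : B.inside p) (hq : q ∈ seMinSet (↑S ∩ B.SE)) (hz : z ∈ S)
    (hzpq : z ∈ uIcc p q) (hzc : z ∉ B.cross) : z = q := by
  obtain ⟨⟨-, hq1, hq2⟩, hmin⟩ := hq
  obtain ⟨hp1, hp2, hp3, hp4⟩ := hp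
  rw [uIcc_prod_eq, mem_prod, uIcc_of_le (by linarith), uIcc_of_ge (by linarith)] at hzpq
  simp only [cross] at hzc
  refine hmin z ⟨hz, ?_, ?_⟩ ⟨hzpq.1.2, hzpq.2.1⟩ <;> by_contra! <;> grind

lemma eq_of_mem_swMinSet (hp : B.inside p) (hq : q ∈ swMinSet (↑S ∩ B.SW)) (hz : z ∈ S)
    (hzpq : z ∈ uIcc p q) (hzc : z ∉ B.cross) : z = q := by
  obtain ⟨⟨-, hq1, hq2⟩, hmin⟩ := hq
  obtain ⟨hp1, hp2, hp3, hp4⟩ := hp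
  rw [uIcc_prod_eq, mem_prod, uIcc_of_ge (by linarith), uIcc_of_ge (by linarith)] at hzpq
  simp only [cross] at hzc
  refine hmin z ⟨hz, ?_, ?_⟩ ⟨hzpq.1.1, hzpq.2.1⟩ <;> by_contra! <;> grind

lemma crossSafeFor_of_inside {color : Pt → Bool} (hp : p ∈ S) (hin : B.inside p)
    (hslab : ∀ q ∈ S, participates (↑S : Set Pt) color q → q ∉ B.cross) :
    crossSafeFor (↑S) color (color p) B := by
  intro z hz hzc
  obtain ⟨hp1, hp2, hp3, hp4⟩ := hin
  have hsub : uIcc p z ⊆ B.cross := by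
    rcases hzc with hzc | hzc
    · exact B.uIcc_subset_cross_of_fst ⟨hp1.le, hp2.le⟩ hzc
    · exact B.uIcc_subset_cross_of_snd ⟨hp3.le, hp4.le⟩ hzc
  exact (color_eq_of_forall_participates_eq hp hz fun w hw hwr hpart =>
    absurd (hsub hwr) (hslab w hw hpart)).symm

end Box

lemma isSafe_of_safeFor {S : Set Pt} {color : Pt → Bool} {B : Box} {c : Bool}
    (h : safeFor S color c B) : isSafe S color B := by
  cases c
  exacts [Or.inr h, Or.inl h]

theorem stmt11_general (S : Finset Pt) (color : Pt → Bool)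
    (B : Box)
    (hslab : ∀ p ∈ S, participates (↑S : Set Pt) color p → p ∉ B.cross)
    (hne : ∃ p ∈ S, B.inside p) :
    isSafe (↑S : Set Pt) color B := by
  obtain ⟨p, hp, hin⟩ := hne
  have hquadrant : ∀ q ∈ S, (∀ z ∈ S, z ∈ uIcc p q → z ∉ B.cross → z = q) →
      color q = color p := fun q hq hcorner =>
    (color_eq_of_forall_participates_eq hp hq fun z hz hzr hpart =>
      hcorner z hz hzr (hslab z hz hpart)).symm
  exact isSafe_of_safeFor
    ⟨Box.crossSafeFor_of_inside hp hin hslab,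
      fun q hq => hquadrant q hq.1.1 fun _ => Box.eq_of_mem_neMinSet hin hq,
      fun q hq => hquadrant q hq.1.1 fun _ => Box.eq_of_mem_nwMinSet hin hq,
      fun q hq => hquadrant q hq.1.1 fun _ => Box.eq_of_mem_seMinSet hin hq,
      fun q hq => hquadrant q hq.1.1 fun _ => Box.eq_of_mem_swMinSet hin hq⟩

/-- A box whose cross contains no participating point of `S` and which contains
at least one point of `S` is safe for `S`. -/
theorem stmt11 (S : Finset Pt) (color : Pt → Bool) (hgp : genPos (↑S : Set Pt))
    (B : Box) (hbd : ∀ q ∈ S, B.offBoundary q)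
    (hslab : ∀ p ∈ S, participates (↑S : Set Pt) color p → p ∉ B.cross)
    (hne : ∃ p ∈ S, B.inside p) :
    isSafe (↑S : Set Pt) color B :=
  stmt11_general S color B hslab hne
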